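/- arXiv:2102.04580 — 7 statements merged into one kernel-verified Lean document; each statement's English description precedes it below -/
import Mathlib

section
/- In any Nash equilibrium (x,y) of a nondegenerate m×n bimatrix game (A,B), the supports of x and y have equal size: |supp(x)| = |supp(y)|. -/
/-!
A mixed best response puts weight only on pure best responses, so in an equilibrium
`supp x ⊆ bestresp1 A y` and `supp y ⊆ bestresp2 B x`. Nondegeneracy bounds the sizes of these
best-response sets by `|supp y|` and `|supp x|` respectively, and the two inequalities close up.
-/

open Matrix
open scoped Classical

noncomputable section

def IsMixed {ι : Type*} [Fintype ι] (x : ι → ℝ) : Prop :=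
  (∀ i, 0 ≤ x i) ∧ ∑ i, x i = 1

def IsNash {ι κ : Type*} [Fintype ι] [Fintype κ]
    (A B : Matrix ι κ ℝ) (x : ι → ℝ) (y : κ → ℝ) : Prop :=
  IsMixed x ∧ IsMixed y ∧
    (∀ x' : ι → ℝ, IsMixed x' → x' ⬝ᵥ (A *ᵥ y) ≤ x ⬝ᵥ (A *ᵥ y)) ∧
    (∀ y' : κ → ℝ, IsMixed y' → x ⬝ᵥ (B *ᵥ y') ≤ x ⬝ᵥ (B *ᵥ y))

def supp {ι : Type*} [Fintype ι] (x : ι → ℝ) : Finset ι :=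
  Finset.univ.filter fun i => 0 < x i

/-- Pure best responses of player 1 against a mixed strategy `y` of player 2. -/
def bestresp1 {ι κ : Type*} [Fintype ι] [Fintype κ] (A : Matrix ι κ ℝ) (y : κ → ℝ) :
    Finset ι :=
  Finset.univ.filter fun i => ∀ k, (A *ᵥ y) k ≤ (A *ᵥ y) i

/-- Pure best responses of player 2 against a mixed strategy `x` of player 1. -/
def bestresp2 {ι κ : Type*} [Fintype ι] [Fintype κ] (B : Matrix ι κ ℝ) (x : ι → ℝ) :
    Finset κ :=
  Finset.univ.filter fun j => ∀ k, (Bᵀ *ᵥ x) k ≤ (Bᵀ *ᵥ x) j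

/-- A bimatrix game is nondegenerate if no mixed strategy of either player has more
pure best responses than the size of its support. -/
def Nondegenerate {ι κ : Type*} [Fintype ι] [Fintype κ] (A B : Matrix ι κ ℝ) : Prop :=
  (∀ x : ι → ℝ, IsMixed x → (bestresp2 B x).card ≤ (supp x).card) ∧
  (∀ y : κ → ℝ, IsMixed y → (bestresp1 A y).card ≤ (supp y).card)

section BestResponse

variable {ι : Type*} [Fintype ι]

lemma isMixed_single (i : ι) : IsMixed (Pi.single i 1 : ι → ℝ) :=
  ⟨fun j => by by_cases h : j = i <;> simp [h], by simp⟩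

lemma le_dotProduct_of_forall_isMixed_le {v x : ι → ℝ}
    (hbr : ∀ x' : ι → ℝ, IsMixed x' → x' ⬝ᵥ v ≤ x ⬝ᵥ v) (k : ι) : v k ≤ x ⬝ᵥ v := by
  simpa using hbr _ (isMixed_single k)

/-- Writing `c = x ⬝ᵥ v`, the terms `x j * (c - v j)` are nonnegative and sum to `0`, so `v j = c`
wherever `x j > 0`. -/
lemma supp_subset_argmax_of_forall_isMixed_le {v x : ι → ℝ} (hx : IsMixed x)
    (hbr : ∀ x' : ι → ℝ, IsMixed x' → x' ⬝ᵥ v ≤ x ⬝ᵥ v) :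
    supp x ⊆ Finset.univ.filter fun i => ∀ k, v k ≤ v i := by
  have hle := le_dotProduct_of_forall_isMixed_le hbr
  have hsum : ∑ j, x j * (x ⬝ᵥ v - v j) = 0 := by
    simp only [mul_sub, Finset.sum_sub_distrib, ← Finset.sum_mul, hx.2, one_mul, dotProduct]
    ring
  have hzero := (Finset.sum_eq_zero_iff_of_nonneg fun j _ =>
    mul_nonneg (hx.1 j) (sub_nonneg.2 (hle j))).1 hsum
  intro i hi
  simp only [supp, Finset.mem_filter, Finset.mem_univ, true_and] at hi ⊢
  have hvi : v i = x ⬝ᵥ v := by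
    have := hzero i (Finset.mem_univ i)
    rcases mul_eq_zero.1 this with h | h
    · exact absurd h hi.ne'
    · linarith
  exact fun k => hvi ▸ hle k

end BestResponse

/-- In any Nash equilibrium of a nondegenerate bimatrix game, the supports of the two
equilibrium strategies have equal size. -/
theorem equal_support_sizes {m n : ℕ} (A B : Matrix (Fin m) (Fin n) ℝ)
    (hnd : Nondegenerate A B) (x : Fin m → ℝ) (y : Fin n → ℝ)
    (h : IsNash A B x y) : (supp x).card = (supp y).card := by
  obtain ⟨hx, hy, hbr₁, hbr₂⟩ := h
  have hsupp₁ : supp x ⊆ bestresp1 A y := supp_subset_argmax_of_forall_isMixed_le hx hbr₁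
  have hsupp₂ : supp y ⊆ bestresp2 B x := by
    refine supp_subset_argmax_of_forall_isMixed_le hy fun y' hy' => ?_
    simpa only [mulVec_transpose, dotProduct_mulVec, dotProduct_comm _ (x ᵥ* B)]
      using hbr₂ y' hy'
  have := Finset.card_le_card hsupp₁
  have := Finset.card_le_card hsupp₂
  have := hnd.1 x hx
  have := hnd.2 y hy
  omega
end
end

section
/- Let (x,y) ∈ X × Y for an m×n bimatrix game (A,B). Then (x,y) is a Nash equilibrium of (A,B) if and only if (x,y) is completely labeled. -/
open Matrix
open scoped Classical

noncomputable section

/-- A mixed strategy `x ∈ X` has label `i` (encoded `Sum.inl i`) if `x i = 0`, and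
label `m + j` (encoded `Sum.inr j`) if column `j` is a pure best response to `x`. -/
def hasLabelX {m n : ℕ} (B : Matrix (Fin m) (Fin n) ℝ) (x : Fin m → ℝ) :
    Fin m ⊕ Fin n → Prop :=
  Sum.elim (fun i => x i = 0) (fun j => ∀ k, (Bᵀ *ᵥ x) k ≤ (Bᵀ *ᵥ x) j)

/-- A mixed strategy `y ∈ Y` has label `i` (encoded `Sum.inl i`) if row `i` is a pure
best response to `y`, and label `m + j` (encoded `Sum.inr j`) if `y j = 0`. -/
def hasLabelY {m n : ℕ} (A : Matrix (Fin m) (Fin n) ℝ) (y : Fin n → ℝ) :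
    Fin m ⊕ Fin n → Prop :=
  Sum.elim (fun i => ∀ k, (A *ᵥ y) k ≤ (A *ᵥ y) i) (fun j => y j = 0)

/-!
A mixed strategy is a best response to a payoff vector `v` exactly when it puts weight only on
maximal entries of `v`: with `M = max v`, the payoff is `x ⬝ᵥ v = M - ∑ i, x i * (M - v i)`, a
sum of nonnegative terms that vanishes iff every `i` in the support of `x` has `v i = M`.
Applied to both players: every row is unplayed or a best reply to `y`, and every column is
unplayed or a best reply to `x`, which is to say that every label is present.
-/

namespace IsMixed

variable {ι : Type*} [Fintype ι] {x : ι → ℝ}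

theorem pi_single (i : ι) : IsMixed (Pi.single i (1 : ℝ)) :=
  ⟨fun j => by rw [Pi.single_apply]; split_ifs <;> norm_num, by simp⟩

theorem nonempty (hx : IsMixed x) : Nonempty ι := by
  by_contra h
  simpa [not_nonempty_iff.1 h] using hx.2

theorem dotProduct_eq_sub_sum (hx : IsMixed x) (v : ι → ℝ) (c : ℝ) :
    x ⬝ᵥ v = c - ∑ i, x i * (c - v i) := by
  simp only [dotProduct, mul_sub, Finset.sum_sub_distrib, ← Finset.sum_mul, hx.2, one_mul,
    sub_sub_cancel]

theorem dotProduct_le (hx : IsMixed x) {v : ι → ℝ} {c : ℝ} (hv : ∀ k, v k ≤ c) :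
    x ⬝ᵥ v ≤ c := by
  rw [hx.dotProduct_eq_sub_sum v c, sub_le_self_iff]
  exact Finset.sum_nonneg fun i _ => mul_nonneg (hx.1 i) (sub_nonneg.2 (hv i))

theorem max_le_dotProduct_iff (hx : IsMixed x) {v : ι → ℝ} {i₀ : ι} (hi₀ : ∀ k, v k ≤ v i₀) :
    v i₀ ≤ x ⬝ᵥ v ↔ ∀ i, x i = 0 ∨ ∀ k, v k ≤ v i := by
  have hterm : ∀ i, 0 ≤ x i * (v i₀ - v i) := fun i =>
    mul_nonneg (hx.1 i) (sub_nonneg.2 (hi₀ i))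
  rw [hx.dotProduct_eq_sub_sum v (v i₀), le_sub_self_iff,
    (Finset.sum_nonneg fun i _ => hterm i).ge_iff_eq', Finset.sum_eq_zero_iff_of_nonneg
      fun i _ => hterm i]
  refine forall_congr' fun i => ?_
  simp only [Finset.mem_univ, true_implies, mul_eq_zero, sub_eq_zero]
  exact or_congr_right ⟨fun h k => h ▸ hi₀ k, fun h => le_antisymm (h i₀) (hi₀ i)⟩

theorem forall_dotProduct_le_iff (hx : IsMixed x) (v : ι → ℝ) :
    (∀ x' : ι → ℝ, IsMixed x' → x' ⬝ᵥ v ≤ x ⬝ᵥ v) ↔ ∀ i, x i = 0 ∨ ∀ k, v k ≤ v i := by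
  have := hx.nonempty
  obtain ⟨i₀, hi₀⟩ := Finite.exists_max v
  rw [← hx.max_le_dotProduct_iff hi₀]
  refine ⟨fun h => ?_, fun h x' hx' => (hx'.dotProduct_le hi₀).trans h⟩
  simpa using h _ (pi_single i₀)

end IsMixed

theorem isNash_iff {ι κ : Type*} [Fintype ι] [Fintype κ] (A B : Matrix ι κ ℝ)
    {x : ι → ℝ} {y : κ → ℝ} (hx : IsMixed x) (hy : IsMixed y) :
    IsNash A B x y ↔ (∀ i, x i = 0 ∨ ∀ k, (A *ᵥ y) k ≤ (A *ᵥ y) i) ∧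
      ∀ j, y j = 0 ∨ ∀ k, (Bᵀ *ᵥ x) k ≤ (Bᵀ *ᵥ x) j := by
  have hB : ∀ y' : κ → ℝ, x ⬝ᵥ (B *ᵥ y') = y' ⬝ᵥ (Bᵀ *ᵥ x) := fun y' => by
    rw [dotProduct_mulVec, mulVec_transpose, dotProduct_comm]
  simp only [IsNash, hx, hy, hB, true_and, hx.forall_dotProduct_le_iff,
    hy.forall_dotProduct_le_iff]

/-- `(x, y) ∈ X × Y` is a Nash equilibrium of `(A, B)` iff `(x, y)` is completely
labeled, i.e. every label in `{1, …, m + n}` is a label of `x` or of `y`. -/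
theorem nash_iff_completely_labeled {m n : ℕ} (A B : Matrix (Fin m) (Fin n) ℝ)
    (x : Fin m → ℝ) (y : Fin n → ℝ) (hx : IsMixed x) (hy : IsMixed y) :
    IsNash A B x y ↔ ∀ l : Fin m ⊕ Fin n, hasLabelX B x l ∨ hasLabelY A y l := by
  rw [isNash_iff A B hx hy, Sum.forall]
  simp only [hasLabelX, hasLabelY, Sum.elim_inl, Sum.elim_inr]
  exact and_congr_right' (forall_congr' fun _ => or_comm)
end
end

section
/- Let (A,B) be an m×n bimatrix game. Then P is bounded (hence a polytope) if and only if max_j (Bᵀx)_j > 0 for every x ∈ X, and Q is bounded (hence a polytope) if and only if max_i (Ay)_i > 0 for every y ∈ Y. -/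
open Matrix
open scoped Classical

noncomputable section

/-- The polyhedron `P = {x ∈ ℝ^m : x ≥ 0, Bᵀx ≤ 𝟙}`. -/
def Pset {m n : ℕ} (B : Matrix (Fin m) (Fin n) ℝ) : Set (Fin m → ℝ) :=
  {x | (∀ i, 0 ≤ x i) ∧ ∀ j, (Bᵀ *ᵥ x) j ≤ 1}

/-- The polyhedron `Q = {y ∈ ℝ^n : Ay ≤ 𝟙, y ≥ 0}`. -/
def Qset {m n : ℕ} (A : Matrix (Fin m) (Fin n) ℝ) : Set (Fin n → ℝ) :=
  {y | (∀ i, (A *ᵥ y) i ≤ 1) ∧ ∀ j, 0 ≤ y j}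

/-! If a mixed strategy `x` has `M x ≤ 0`, the whole ray `{t • x | t ≥ 0}` lies in
`{x ≥ 0 : M x ≤ 𝟙}`. Conversely, `∑ⱼ max ((M x)ⱼ, 0)` is continuous and positive on the compact
simplex, hence at least some `δ > 0` there; being positively homogeneous, it is at least
`δ ∑ᵢ xᵢ` for every `x ≥ 0`, while on the polyhedron it is at most the number of rows of `M`. -/

open Finset

section

variable {ι κ : Type*} [Fintype ι]

lemma norm_le_sum_of_nonneg {x : ι → ℝ} (hx : ∀ i, 0 ≤ x i) : ‖x‖ ≤ ∑ i, x i := by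
  refine (pi_norm_le_iff_of_nonneg (sum_nonneg fun i _ => hx i)).2 fun i => ?_
  rw [Real.norm_of_nonneg (hx i)]
  exact single_le_sum (fun k _ => hx k) (mem_univ i)

def unitPolyhedron (M : Matrix κ ι ℝ) : Set (ι → ℝ) :=
  {x | (∀ i, 0 ≤ x i) ∧ ∀ j, (M *ᵥ x) j ≤ 1}

variable (M : Matrix κ ι ℝ)

lemma smul_mem_unitPolyhedron {x : ι → ℝ} (hx : ∀ i, 0 ≤ x i) (hM : ∀ j, (M *ᵥ x) j ≤ 0)
    {t : ℝ} (ht : 0 ≤ t) : t • x ∈ unitPolyhedron M := by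
  refine ⟨fun i => mul_nonneg ht (hx i), fun j => ?_⟩
  rw [mulVec_smul, Pi.smul_apply, smul_eq_mul]
  linarith [mul_nonpos_of_nonneg_of_nonpos ht (hM j)]

lemma exists_pos_mulVec_of_isBounded (hb : Bornology.IsBounded (unitPolyhedron M))
    {x : ι → ℝ} (hx : IsMixed x) : ∃ j, 0 < (M *ᵥ x) j := by
  by_contra! hM
  obtain ⟨C, hC⟩ := isBounded_iff_forall_norm_le.1 hb
  have hx0 : 0 < ‖x‖ := norm_pos_iff.2 fun h => by simpa [h] using hx.2
  set t := (|C| + 1) / ‖x‖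
  have ht : 0 ≤ t := by positivity
  have hnorm := hC _ (smul_mem_unitPolyhedron M hx.1 hM ht)
  rw [norm_smul, Real.norm_of_nonneg ht, div_mul_cancel₀ _ hx0.ne'] at hnorm
  linarith [le_abs_self C]

variable [Fintype κ]

/-- Replaces the best-response payoff `maxⱼ (M x)ⱼ`, which is undefined for an empty `κ`. -/
def sumPosPart (M : Matrix κ ι ℝ) (x : ι → ℝ) : ℝ := ∑ j, max ((M *ᵥ x) j) 0

lemma continuous_sumPosPart : Continuous (sumPosPart M) := by
  unfold sumPosPart
  fun_prop

lemma sumPosPart_smul {c : ℝ} (hc : 0 ≤ c) (x : ι → ℝ) :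
    sumPosPart M (c • x) = c * sumPosPart M x := by
  simp only [sumPosPart, mulVec_smul, Pi.smul_apply, smul_eq_mul, mul_sum,
    mul_max_of_nonneg _ _ hc, mul_zero]

lemma sumPosPart_le_card {x : ι → ℝ} (hx : x ∈ unitPolyhedron M) :
    sumPosPart M x ≤ Fintype.card κ := by
  calc sumPosPart M x ≤ ∑ _j : κ, (1 : ℝ) :=
        sum_le_sum fun j _ => max_le (hx.2 j) zero_le_one
    _ = Fintype.card κ := by simp

lemma exists_pos_le_sumPosPart (hpos : ∀ x, IsMixed x → ∃ j, 0 < (M *ᵥ x) j) :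
    ∃ δ, 0 < δ ∧ ∀ x ∈ stdSimplex ℝ ι, δ ≤ sumPosPart M x := by
  refine (isCompact_stdSimplex ℝ ι).exists_forall_le'
    (continuous_sumPosPart M).continuousOn fun x hx => ?_
  obtain ⟨j, hj⟩ := hpos x hx
  calc 0 < max ((M *ᵥ x) j) 0 := lt_max_of_lt_left hj
    _ ≤ sumPosPart M x := single_le_sum (f := fun j => max ((M *ᵥ x) j) 0)
        (fun _ _ => le_max_right _ _) (mem_univ j)

lemma mul_sum_le_sumPosPart {δ : ℝ} (hδ : ∀ x ∈ stdSimplex ℝ ι, δ ≤ sumPosPart M x)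
    {x : ι → ℝ} (hx : ∀ i, 0 ≤ x i) : δ * ∑ i, x i ≤ sumPosPart M x := by
  rcases (sum_nonneg fun i _ => hx i : 0 ≤ ∑ i, x i).eq_or_lt with hs | hs
  · rw [← hs, mul_zero]
    exact sum_nonneg fun _ _ => le_max_right _ _
  · have hmixed : (∑ i, x i)⁻¹ • x ∈ stdSimplex ℝ ι :=
      ⟨fun i => mul_nonneg (inv_nonneg.2 hs.le) (hx i), by
        simp only [Pi.smul_apply, smul_eq_mul, ← mul_sum, inv_mul_cancel₀ hs.ne']⟩
    have := hδ _ hmixed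
    rwa [sumPosPart_smul M (inv_nonneg.2 hs.le), le_inv_mul_iff₀ hs, mul_comm] at this

theorem isBounded_unitPolyhedron_iff :
    Bornology.IsBounded (unitPolyhedron M) ↔ ∀ x, IsMixed x → ∃ j, 0 < (M *ᵥ x) j := by
  refine ⟨fun hb x hx => exists_pos_mulVec_of_isBounded M hb hx, fun hpos => ?_⟩
  obtain ⟨δ, hδ, hle⟩ := exists_pos_le_sumPosPart M hpos
  refine isBounded_iff_forall_norm_le.2 ⟨Fintype.card κ / δ, fun x hx => ?_⟩
  calc ‖x‖ ≤ ∑ i, x i := norm_le_sum_of_nonneg hx.1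
    _ ≤ Fintype.card κ / δ := by
      rw [le_div_iff₀' hδ]
      exact (mul_sum_le_sumPosPart M hle hx.1).trans (sumPosPart_le_card M hx)

end

/-- `P` is bounded iff the best-response payoff `max_j (Bᵀx)_j` to every mixed strategy
`x ∈ X` is positive, and `Q` is bounded iff the best-response payoff `max_i (Ay)_i` to
every mixed strategy `y ∈ Y` is positive. -/
theorem polytope_iff_positive_bestresponse_payoff {m n : ℕ}
    (A B : Matrix (Fin m) (Fin n) ℝ) :
    (Bornology.IsBounded (Pset B) ↔
      ∀ x : Fin m → ℝ, IsMixed x → ∃ j, 0 < (Bᵀ *ᵥ x) j) ∧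
    (Bornology.IsBounded (Qset A) ↔
      ∀ y : Fin n → ℝ, IsMixed y → ∃ i, 0 < (A *ᵥ y) i) := by
  have hQ : Qset A = unitPolyhedron A := Set.ext fun _ => and_comm
  exact ⟨isBounded_unitPolyhedron_iff Bᵀ, hQ ▸ isBounded_unitPolyhedron_iff A⟩
end
end

section
/- Let c_0, c_1, …, c_d ∈ ℝ^d and q_0, q_1, …, q_d ∈ ℝ, and let x, y ∈ ℝ^d satisfy: c_0ᵀx < q_0 and c_0ᵀy = q_0; c_1ᵀx = q_1 and c_1ᵀy < q_1; and c_iᵀx = q_i and c_iᵀy = q_i for all i = 2,…,d. Assume the vectors c_1, c_2, …, c_d are linearly independent and the vectors c_0, c_2, …, c_d are linearly independent. Then sign(det[c_1 c_2 ⋯ c_d]) = −sign(det[c_0 c_2 ⋯ c_d]) ≠ 0, where [v_1 ⋯ v_d] denotes the d×d matrix with columns v_1,…,v_d. -/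
open Matrix
open scoped Classical

noncomputable section

/-!
The edge direction `z = x - y` is orthogonal to `c_2, …, c_d`, while `c_1ᵀz > 0` and `c_0ᵀz < 0`.
Pairing Cramer's rule `A (cramer A c_0) = det A • c_0`, for `A = [c_1 ⋯ c_d]`, with `z` kills
every coordinate of `cramer A c_0` but the first, which is `det[c_0 c_2 ⋯ c_d]`; this gives
`det[c_0 c_2 ⋯ c_d] · c_1ᵀz = det[c_1 c_2 ⋯ c_d] · c_0ᵀz`, and the two determinants have
opposite signs.
-/

theorem Real.sign_eq_neg_sign_of_mul_eq {a b m p : ℝ} (hm : m < 0) (hp : 0 < p)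
    (h : a * m = b * p) : Real.sign a = -Real.sign b := by
  rcases lt_trichotomy b 0 with hb | rfl | hb
  · rw [Real.sign_of_neg hb, Real.sign_of_pos (by nlinarith)]
    norm_num
  · obtain rfl : a = 0 := by simpa [hm.ne] using h
    simp [Real.sign_zero]
  · rw [Real.sign_of_pos hb, Real.sign_of_neg (by nlinarith)]

namespace Matrix

variable {n R : Type*} [Fintype n] [CommRing R]

theorem vecMul_of_transpose_apply (v : n → n → R) (z : n → R) (j : n) :
    (z ᵥ* of fun r j => v j r) j = v j ⬝ᵥ z := by
  simp only [vecMul, dotProduct, of_apply, mul_comm]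

variable [DecidableEq n]

theorem det_updateCol_mul_vecMul_apply (A : Matrix n n R) (i : n) (v z : n → R)
    (hz : ∀ j ≠ i, (z ᵥ* A) j = 0) :
    (A.updateCol i v).det * (z ᵥ* A) i = A.det * (z ⬝ᵥ v) := by
  have hcramer : z ⬝ᵥ (A *ᵥ cramer A v) = A.det * (z ⬝ᵥ v) := by
    rw [mulVec_cramer, dotProduct_smul, smul_eq_mul]
  rw [← hcramer, dotProduct_mulVec, dotProduct, Finset.sum_eq_single i (fun j _ hj => by
    rw [hz j hj, zero_mul]) (fun h => absurd (Finset.mem_univ i) h), cramer_apply, mul_comm]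

theorem det_ne_zero_of_linearIndependent_cols {K : Type*} [Field K] {v : n → n → K}
    (hv : LinearIndependent K v) : (of fun r j => v j r).det ≠ 0 := by
  rw [show (of fun r j => v j r) = (of v)ᵀ from rfl, det_transpose]
  exact ((isUnit_iff_isUnit_det _).mp (linearIndependent_rows_iff_isUnit.mp hv)).ne_zero

end Matrix

theorem pivoting_changes_sign_general {d : ℕ}
    (c : Fin (d + 1) → Fin d → ℝ) (q : Fin (d + 1) → ℝ) (x y : Fin d → ℝ)
    (hx0 : c 0 ⬝ᵥ x < q 0) (hy0 : c 0 ⬝ᵥ y = q 0)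
    (hx1 : c 1 ⬝ᵥ x = q 1) (hy1 : c 1 ⬝ᵥ y < q 1)
    (hxi : ∀ i : Fin (d + 1), 2 ≤ (i : ℕ) → c i ⬝ᵥ x = q i)
    (hyi : ∀ i : Fin (d + 1), 2 ≤ (i : ℕ) → c i ⬝ᵥ y = q i)
    (hli0 : LinearIndependent ℝ (fun j : Fin d => if (j : ℕ) = 0 then c 0 else c j.succ)) :
    Real.sign (Matrix.of fun r j : Fin d => c j.succ r).det =
      - Real.sign (Matrix.of fun r j : Fin d =>
          if (j : ℕ) = 0 then c 0 r else c j.succ r).det ∧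
    (Matrix.of fun r j : Fin d => if (j : ℕ) = 0 then c 0 r else c j.succ r).det ≠ 0 := by
  cases d with
  | zero => exact absurd hx1 (ne_of_lt hx0) -- `1 = 0` in `Fin 1`
  | succ n =>
    set A : Matrix (Fin (n + 1)) (Fin (n + 1)) ℝ := of fun r j => c j.succ r
    have hB : (of fun r j : Fin (n + 1) => if (j : ℕ) = 0 then c 0 r else c j.succ r)
        = A.updateCol 0 (c 0) := by
      ext r j
      rcases Fin.eq_zero_or_eq_succ j with rfl | ⟨k, rfl⟩ <;> simp [A]
    have hdetB := det_ne_zero_of_linearIndependent_cols hli0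
    simp only [ite_apply] at hdetB
    have hz : ∀ j ≠ 0, ((x - y) ᵥ* A) j = 0 := fun j hj => by
      have h2 : 2 ≤ ((j.succ : Fin (n + 2)) : ℕ) := by
        simp only [Fin.val_succ]; have := Fin.pos_of_ne_zero hj; omega
      rw [vecMul_of_transpose_apply, dotProduct_sub, hxi _ h2, hyi _ h2, sub_self]
    have hc1 : 0 < ((x - y) ᵥ* A) 0 := by
      rw [vecMul_of_transpose_apply, Fin.succ_zero_eq_one, dotProduct_sub]; linarith
    have hc0 : (x - y) ⬝ᵥ c 0 < 0 := by
      rw [dotProduct_comm, dotProduct_sub]; linarith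
    have key := det_updateCol_mul_vecMul_apply A 0 (c 0) (x - y) hz
    rw [← hB] at key
    exact ⟨Real.sign_eq_neg_sign_of_mul_eq hc0 hc1 key.symm, hdetB⟩

/-- **Pivoting changes sign.**  Let `x` and `y` be the endpoints of an edge of a
nondegenerate polytope, defined by the `d - 1` binding inequalities
`c_iᵀ z = q_i` (`i = 2, …, d`), with additional binding inequality `c_1ᵀ x = q_1`
at `x` and `c_0ᵀ y = q_0` at `y`.  Then
`sign det[c_1 c_2 ⋯ c_d] = - sign det[c_0 c_2 ⋯ c_d] ≠ 0`. -/
theorem pivoting_changes_sign {d : ℕ}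
    (c : Fin (d + 1) → Fin d → ℝ) (q : Fin (d + 1) → ℝ) (x y : Fin d → ℝ)
    (hx0 : c 0 ⬝ᵥ x < q 0) (hy0 : c 0 ⬝ᵥ y = q 0)
    (hx1 : c 1 ⬝ᵥ x = q 1) (hy1 : c 1 ⬝ᵥ y < q 1)
    (hxi : ∀ i : Fin (d + 1), 2 ≤ (i : ℕ) → c i ⬝ᵥ x = q i)
    (hyi : ∀ i : Fin (d + 1), 2 ≤ (i : ℕ) → c i ⬝ᵥ y = q i)
    (hli1 : LinearIndependent ℝ (fun j : Fin d => c j.succ))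
    (hli0 : LinearIndependent ℝ (fun j : Fin d => if (j : ℕ) = 0 then c 0 else c j.succ)) :
    Real.sign (Matrix.of fun r j : Fin d => c j.succ r).det =
      - Real.sign (Matrix.of fun r j : Fin d =>
          if (j : ℕ) = 0 then c 0 r else c j.succ r).det ∧
    (Matrix.of fun r j : Fin d => if (j : ℕ) = 0 then c 0 r else c j.succ r).det ≠ 0 :=
  pivoting_changes_sign_general c q x y hx0 hy0 hx1 hy1 hxi hyi hli0
end
end

section
/- Let (A,B) be an m×n bimatrix game such that P and Q are bounded. Then (A,B) is nondegenerate if and only if no point of P has more than m labels and no point of Q has more than n labels. -/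
/-!
Both sides of the equivalence split into one condition per player, and for a single payoff
matrix `M` with bounded polytope `{x ≥ 0, M x ≤ 𝟙}` the two conditions correspond under rescaling.
A nonzero point `x` of the polytope is a positive multiple of a mixed strategy with the same
support, and its tight constraints are best responses to it, which gives one direction.
Conversely, boundedness forces `M x` to have a positive maximum `v` for every mixed strategy `x`,
and then the tight constraints of `v⁻¹ • x` are exactly the best responses to `x`. In both cases
the zero coordinates of `x` complement its support.
-/

open Matrix
open scoped Classical

noncomputable section

/-- The labels of a point `x ∈ P`: label `i` (encoded `Sum.inl i`) if `x i = 0`, and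
label `m + j` (encoded `Sum.inr j`) if `(Bᵀx)_j = 1`. -/
def labelsP {m n : ℕ} (B : Matrix (Fin m) (Fin n) ℝ) (x : Fin m → ℝ) :
    Finset (Fin m ⊕ Fin n) :=
  Finset.univ.filter (Sum.elim (fun i => x i = 0) (fun j => (Bᵀ *ᵥ x) j = 1))

/-- The labels of a point `y ∈ Q`: label `i` (encoded `Sum.inl i`) if `(Ay)_i = 1`,
and label `m + j` (encoded `Sum.inr j`) if `y j = 0`. -/
def labelsQ {m n : ℕ} (A : Matrix (Fin m) (Fin n) ℝ) (y : Fin n → ℝ) :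
    Finset (Fin m ⊕ Fin n) :=
  Finset.univ.filter (Sum.elim (fun i => (A *ᵥ y) i = 1) (fun j => y j = 0))

open Finset

variable {ι κ : Type*} [Fintype ι] [Fintype κ]

lemma card_filter_sumElim (p : ι → Prop) (q : κ → Prop) :
    #(univ.filter (Sum.elim p q)) = #(univ.filter p) + #(univ.filter q) := by
  simp only [card_filter, Fintype.sum_sum_type, Sum.elim_inl, Sum.elim_inr]
  rfl

def unitPolytope (M : Matrix ι κ ℝ) : Set (κ → ℝ) :=
  {x | (∀ k, 0 ≤ x k) ∧ ∀ i, (M *ᵥ x) i ≤ 1}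

def zeroSet (x : κ → ℝ) : Finset κ :=
  univ.filter fun k => x k = 0

def tightSet (M : Matrix ι κ ℝ) (x : κ → ℝ) : Finset ι :=
  univ.filter fun i => (M *ᵥ x) i = 1

def BestRespNondegenerate (M : Matrix ι κ ℝ) : Prop :=
  ∀ y : κ → ℝ, IsMixed y → #(bestresp1 M y) ≤ #(supp y)

lemma nondegenerate_iff_bestRespNondegenerate (A B : Matrix ι κ ℝ) :
    Nondegenerate A B ↔ BestRespNondegenerate Bᵀ ∧ BestRespNondegenerate A :=
  Iff.rfl

lemma card_zeroSet_add_card_supp {x : κ → ℝ} (hx : ∀ k, 0 ≤ x k) :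
    #(zeroSet x) + #(supp x) = Fintype.card κ := by
  have hzero : zeroSet x = univ.filter fun k => ¬ 0 < x k := by
    ext k
    simpa [zeroSet] using (hx k).ge_iff_eq'.symm
  rw [hzero, supp, add_comm, card_filter_add_card_filter_not, card_univ]

section Scaling

variable {c : ℝ} {x : κ → ℝ}

lemma zeroSet_smul (hc : c ≠ 0) : zeroSet (c • x) = zeroSet x := by
  ext k
  simp [zeroSet, hc]

lemma supp_smul (hc : 0 < c) : supp (c • x) = supp x := by
  ext k
  simp [supp, mul_pos_iff_of_pos_left hc]

lemma bestresp1_smul (M : Matrix ι κ ℝ) (hc : 0 < c) : bestresp1 M (c • x) = bestresp1 M x := by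
  ext i
  simp [bestresp1, mulVec_smul, mul_le_mul_iff_of_pos_left hc]

end Scaling

lemma tightSet_subset_bestresp1 {M : Matrix ι κ ℝ} {x : κ → ℝ} (hx : ∀ i, (M *ᵥ x) i ≤ 1) :
    tightSet M x ⊆ bestresp1 M x := by
  intro i hi
  simp only [tightSet, bestresp1, mem_filter, mem_univ, true_and] at hi ⊢
  exact fun k => hi ▸ hx k

lemma tightSet_inv_smul_eq_bestresp1 {M : Matrix ι κ ℝ} {x : κ → ℝ} {i₀ : ι}
    (hpos : 0 < (M *ᵥ x) i₀) (hmax : ∀ i, (M *ᵥ x) i ≤ (M *ᵥ x) i₀) :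
    tightSet M (((M *ᵥ x) i₀)⁻¹ • x) = bestresp1 M x := by
  ext i
  simp only [tightSet, bestresp1, mem_filter, mem_univ, true_and, mulVec_smul, Pi.smul_apply,
    smul_eq_mul, inv_mul_eq_one₀ hpos.ne']
  constructor
  · intro h k
    exact h ▸ hmax k
  · intro h
    exact le_antisymm (h i₀) (hmax i)

lemma isMixed_inv_sum_smul {x : κ → ℝ} (hx : ∀ k, 0 ≤ x k) (hs : 0 < ∑ k, x k) :
    IsMixed ((∑ k, x k)⁻¹ • x) := by
  refine ⟨fun k => mul_nonneg (inv_nonneg.mpr hs.le) (hx k), ?_⟩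
  simp only [Pi.smul_apply, smul_eq_mul, ← mul_sum, inv_mul_cancel₀ hs.ne']

/-- The ray through a nonnegative `x` with `M x ≤ 0` would lie in the polytope. -/
lemma exists_pos_mulVec_of_isBounded_s10 {M : Matrix ι κ ℝ}
    (hbdd : Bornology.IsBounded (unitPolytope M)) {x : κ → ℝ} (hx : ∀ k, 0 ≤ x k)
    (hx0 : x ≠ 0) : ∃ i, 0 < (M *ᵥ x) i := by
  by_contra! hMx
  obtain ⟨C, hC⟩ := isBounded_iff_forall_norm_le.mp hbdd
  have hray : ∀ t : ℝ, 0 ≤ t → t • x ∈ unitPolytope M := fun t ht =>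
    ⟨fun k => mul_nonneg ht (hx k),
      fun i => by
        simpa [mulVec_smul] using (mul_nonpos_of_nonneg_of_nonpos ht (hMx i)).trans zero_le_one⟩
  have hC0 : 0 ≤ C := by simpa using hC 0 (by simpa using hray 0 le_rfl)
  have hxn : 0 < ‖x‖ := norm_pos_iff.mpr hx0
  have ht : 0 ≤ (C + 1) / ‖x‖ := by positivity
  have := hC _ (hray _ ht)
  rw [norm_smul, Real.norm_of_nonneg ht, div_mul_cancel₀ _ hxn.ne'] at this
  linarith

lemma card_zeroSet_add_card_tightSet_le {M : Matrix ι κ ℝ} (hM : BestRespNondegenerate M)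
    {x : κ → ℝ} (hx : x ∈ unitPolytope M) :
    #(zeroSet x) + #(tightSet M x) ≤ Fintype.card κ := by
  obtain ⟨hx, hMx⟩ := hx
  rw [← card_zeroSet_add_card_supp hx, add_le_add_iff_left]
  by_cases hx0 : x = 0
  · have : tightSet M x = ∅ := by
      ext i
      simp [tightSet, hx0]
    simp [this]
  · have hs : 0 < ∑ k, x k := Fintype.sum_pos (lt_of_le_of_ne hx (Ne.symm hx0))
    have hbest := hM _ (isMixed_inv_sum_smul hx hs)
    rw [bestresp1_smul M (inv_pos.mpr hs), supp_smul (inv_pos.mpr hs)] at hbest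
    exact (card_le_card (tightSet_subset_bestresp1 hMx)).trans hbest

lemma bestRespNondegenerate_of_card_le {M : Matrix ι κ ℝ}
    (hbdd : Bornology.IsBounded (unitPolytope M))
    (h : ∀ x ∈ unitPolytope M, #(zeroSet x) + #(tightSet M x) ≤ Fintype.card κ) :
    BestRespNondegenerate M := by
  intro x ⟨hx, hsum⟩
  have hx0 : x ≠ 0 := by
    rintro rfl
    simp at hsum
  obtain ⟨i₁, hi₁⟩ := exists_pos_mulVec_of_isBounded_s10 hbdd hx hx0
  have : Nonempty ι := ⟨i₁⟩
  obtain ⟨i₀, hmax⟩ := Finite.exists_max (M *ᵥ x)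
  have hpos : 0 < (M *ᵥ x) i₀ := hi₁.trans_le (hmax i₁)
  have hmem : ((M *ᵥ x) i₀)⁻¹ • x ∈ unitPolytope M := by
    refine ⟨fun k => mul_nonneg (inv_nonneg.mpr hpos.le) (hx k), fun i => ?_⟩
    rw [mulVec_smul, Pi.smul_apply, smul_eq_mul, inv_mul_le_one₀ hpos]
    exact hmax i
  have hlabels := h _ hmem
  rwa [zeroSet_smul (inv_ne_zero hpos.ne'), tightSet_inv_smul_eq_bestresp1 hpos hmax,
    ← card_zeroSet_add_card_supp hx, add_le_add_iff_left] at hlabels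

theorem bestRespNondegenerate_iff {M : Matrix ι κ ℝ}
    (hbdd : Bornology.IsBounded (unitPolytope M)) :
    BestRespNondegenerate M ↔
      ∀ x ∈ unitPolytope M, #(zeroSet x) + #(tightSet M x) ≤ Fintype.card κ :=
  ⟨fun hM _ hx => card_zeroSet_add_card_tightSet_le hM hx, bestRespNondegenerate_of_card_le hbdd⟩

/-- If `P` and `Q` are bounded, then `(A,B)` is nondegenerate iff no point of `P` has
more than `m` labels and no point of `Q` has more than `n` labels. -/
theorem nondegenerate_iff_polytope_labels {m n : ℕ} (A B : Matrix (Fin m) (Fin n) ℝ)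
    (hP : Bornology.IsBounded (Pset B)) (hQ : Bornology.IsBounded (Qset A)) :
    Nondegenerate A B ↔
      (∀ x ∈ Pset B, (labelsP B x).card ≤ m) ∧
      (∀ y ∈ Qset A, (labelsQ A y).card ≤ n) := by
  have hPset : Pset B = unitPolytope Bᵀ := rfl
  have hQset : Qset A = unitPolytope A := Set.ext fun _ => and_comm
  have hlabelsP (x : Fin m → ℝ) : #(labelsP B x) = #(zeroSet x) + #(tightSet Bᵀ x) :=
    card_filter_sumElim _ _
  have hlabelsQ (y : Fin n → ℝ) : #(labelsQ A y) = #(zeroSet y) + #(tightSet A y) :=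
    (card_filter_sumElim _ _).trans (add_comm _ _)
  rw [hPset] at hP ⊢
  rw [hQset] at hQ ⊢
  simp only [hlabelsP, hlabelsQ]
  rw [nondegenerate_iff_bestRespNondegenerate, bestRespNondegenerate_iff hP,
    bestRespNondegenerate_iff hQ, Fintype.card_fin, Fintype.card_fin]
end
end

section
/- Let C be a d×d real matrix such that S = {z ∈ ℝ^d : z ≥ 0, Cz ≤ 𝟙} is bounded. Then the following are equivalent: (i) no z ∈ S has more than d binding inequalities among z ≥ 0, Cz ≤ 𝟙; (ii) for every z ∈ S, the family of vectors consisting of the unit vectors e_i for each binding inequality z_i = 0 together with the rows c_jᵀ of C for each binding inequality (Cz)_j = 1 is linearly independent. -/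
/-!
A linearly independent family in `ℝ^d` has at most `d` members, which gives one direction.
Conversely, suppose at most `d` inequalities bind at `z ∈ S` but their vectors are dependent.
They then span a proper subspace, so some `v ≠ 0` is orthogonal to all of them, and every
inequality binding at `z` stays binding along the line `z + t • v`. As `S` is compact there is a
largest `t` with `z + t • v ∈ S`; at that point a new inequality binds (otherwise the line could
be followed further inside `S`) and the binding family is still dependent. So the number of
binding inequalities at a point with dependent binding family could be increased forever,
although it is bounded by `d`.
-/

open Matrix
open scoped Classical

noncomputable section

/-- The polytope `S = {z ∈ ℝ^d : z ≥ 0, Cz ≤ 𝟙}`. -/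
def Sset {d : ℕ} (C : Matrix (Fin d) (Fin d) ℝ) : Set (Fin d → ℝ) :=
  {z | (∀ i, 0 ≤ z i) ∧ ∀ i, (C *ᵥ z) i ≤ 1}


theorem Nat.forall_not_of_le_of_exists_lt {α : Type*} {P : α → Prop} (f : α → ℕ) (n : ℕ)
    (hbdd : ∀ x, P x → f x ≤ n) (hstep : ∀ x, P x → ∃ y, P y ∧ f x < f y) :
    ∀ x, ¬ P x := by
  intro x hx
  induction hk : n - f x using Nat.strong_induction_on generalizing x with
  | _ k ih =>
    obtain ⟨y, hy, hlt⟩ := hstep x hx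
    exact ih (n - f y) (by have := hbdd y hy; omega) y hy rfl

theorem IsCompact.exists_isGreatest_add_smul_mem {E : Type*} [AddCommGroup E] [Module ℝ E]
    [TopologicalSpace E] [IsTopologicalAddGroup E] [ContinuousSMul ℝ E] [T2Space E]
    {K : Set E} (hK : IsCompact K) {x v : E} (hx : x ∈ K) (hv : v ≠ 0) :
    ∃ t, IsGreatest {s : ℝ | x + s • v ∈ K} t := by
  have hcpt : IsCompact ((fun s : ℝ => s • v) ⁻¹' ((x + ·) ⁻¹' K)) :=
    (isClosedEmbedding_smul_left hv).isCompact_preimage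
      ((Homeomorph.addLeft x).isCompact_preimage.2 hK)
  exact hcpt.exists_isGreatest ⟨0, by simpa using hx⟩

theorem Matrix.exists_ne_zero_forall_dotProduct_eq_zero {K ι n : Type*} [Field K] [Fintype ι]
    [Fintype n] {f : ι → n → K} (hf : ¬ LinearIndependent K f)
    (hcard : Fintype.card ι ≤ Fintype.card n) :
    ∃ v ≠ 0, ∀ k, f k ⬝ᵥ v = 0 := by
  have hrank : (Matrix.of f).rank < Fintype.card n := by
    rw [Matrix.rank_eq_finrank_span_row]
    rw [linearIndependent_iff_card_le_finrank_span] at hf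
    exact (not_le.1 hf).trans_le hcard
  have hker : LinearMap.ker (Matrix.of f).mulVecLin ≠ ⊥ := by
    intro hbot
    have := LinearMap.finrank_range_add_finrank_ker (Matrix.of f).mulVecLin
    rw [hbot, finrank_bot, Module.finrank_fintype_fun_eq_card] at this
    exact hrank.ne (by rw [Matrix.rank]; omega)
  obtain ⟨v, hv, hv0⟩ := Submodule.exists_mem_ne_zero_of_ne_bot hker
  exact ⟨v, hv0, fun k => congrFun hv k⟩

namespace Sset

variable {d : ℕ} (C : Matrix (Fin d) (Fin d) ℝ)

theorem isClosed : IsClosed (Sset C) :=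
  (isClosed_le continuous_const continuous_id).inter
    (isClosed_le (continuous_const.matrix_mulVec continuous_id) continuous_const)

theorem isCompact_of_isBounded (hb : Bornology.IsBounded (Sset C)) : IsCompact (Sset C) :=
  Metric.isCompact_of_isClosed_isBounded (isClosed C) hb

end Sset

open Filter Topology

section Binding

variable {d : ℕ} (C : Matrix (Fin d) (Fin d) ℝ)

def bindingFamily (z : Fin d → ℝ) :
    {i : Fin d // z i = 0} ⊕ {j : Fin d // (C *ᵥ z) j = 1} → (Fin d → ℝ) :=
  Sum.elim (fun i => Pi.single i.1 1) (fun j => C j.1)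

def bindingCount (z : Fin d → ℝ) : ℕ :=
  (Finset.univ.filter fun i => z i = 0).card +
    (Finset.univ.filter fun j => (C *ᵥ z) j = 1).card

def BindingLE (z w : Fin d → ℝ) : Prop :=
  (∀ i, z i = 0 → w i = 0) ∧ ∀ j, (C *ᵥ z) j = 1 → (C *ᵥ w) j = 1

variable {C}

theorem BindingLE.trans {x y z : Fin d → ℝ} (hxy : BindingLE C x y) (hyz : BindingLE C y z) :
    BindingLE C x z :=
  ⟨fun i hi => hyz.1 i (hxy.1 i hi), fun j hj => hyz.2 j (hxy.2 j hj)⟩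

theorem card_bindingIndex (z : Fin d → ℝ) :
    Fintype.card ({i : Fin d // z i = 0} ⊕ {j : Fin d // (C *ᵥ z) j = 1}) = bindingCount C z := by
  simp only [Fintype.card_sum, Fintype.card_subtype, bindingCount]

theorem bindingCount_le_of_linearIndependent {z : Fin d → ℝ}
    (h : LinearIndependent ℝ (bindingFamily C z)) : bindingCount C z ≤ d := by
  have := h.fintype_card_le_finrank
  rwa [card_bindingIndex, Module.finrank_fin_fun] at this

theorem bindingCount_lt_of_bindingLE {z w : Fin d → ℝ} (h : BindingLE C z w)
    (h' : ¬ BindingLE C w z) : bindingCount C z < bindingCount C w := by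
  have hzero : (Finset.univ.filter fun i => z i = 0) ⊆ Finset.univ.filter fun i => w i = 0 :=
    Finset.monotone_filter_right _ fun i _ => h.1 i
  have htight : (Finset.univ.filter fun j => (C *ᵥ z) j = 1) ⊆
      Finset.univ.filter fun j => (C *ᵥ w) j = 1 :=
    Finset.monotone_filter_right _ fun j _ => h.2 j
  simp only [BindingLE, not_and_or, not_forall, exists_prop] at h'
  unfold bindingCount
  rcases h' with ⟨i, hwi, hzi⟩ | ⟨j, hwj, hzj⟩
  · have := Finset.card_lt_card <|
      (Finset.ssubset_iff_of_subset hzero).2 ⟨i, by simpa using hwi, by simpa using hzi⟩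
    have := Finset.card_le_card htight
    omega
  · have := Finset.card_lt_card <|
      (Finset.ssubset_iff_of_subset htight).2 ⟨j, by simpa using hwj, by simpa using hzj⟩
    have := Finset.card_le_card hzero
    omega

theorem linearIndependent_bindingFamily_of_bindingLE {z w : Fin d → ℝ} (h : BindingLE C z w)
    (hw : LinearIndependent ℝ (bindingFamily C w)) : LinearIndependent ℝ (bindingFamily C z) := by
  have hinj : Function.Injective
      (Sum.map (fun i => ⟨i.1, h.1 i.1 i.2⟩ : {i // z i = 0} → {i // w i = 0})
        (fun j => ⟨j.1, h.2 j.1 j.2⟩ : {j // (C *ᵥ z) j = 1} → {j // (C *ᵥ w) j = 1})) :=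
    Function.Injective.sumMap (fun _ _ hab => Subtype.ext (Subtype.mk.inj hab))
      (fun _ _ hab => Subtype.ext (Subtype.mk.inj hab))
  convert hw.comp _ hinj using 1
  ext (_ | _) <;> rfl

theorem exists_ne_zero_bindingLE_add_smul {z : Fin d → ℝ}
    (hdep : ¬ LinearIndependent ℝ (bindingFamily C z)) (hcount : bindingCount C z ≤ d) :
    ∃ v ≠ 0, ∀ t : ℝ, BindingLE C z (z + t • v) := by
  obtain ⟨v, hv0, hv⟩ := Matrix.exists_ne_zero_forall_dotProduct_eq_zero hdep
    (by rwa [card_bindingIndex, Fintype.card_fin])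
  refine ⟨v, hv0, fun t => ⟨fun i hi => ?_, fun j hj => ?_⟩⟩
  · have := hv (Sum.inl ⟨i, hi⟩)
    simp only [bindingFamily, Sum.elim_inl, single_dotProduct, one_mul] at this
    simp [hi, this]
  · have : (C *ᵥ v) j = 0 := hv (Sum.inr ⟨j, hj⟩)
    simp [Matrix.mulVec_add, Matrix.mulVec_smul, hj, this]

theorem eventually_mem_Sset {z : Fin d → ℝ} (hz : z ∈ Sset C) :
    ∀ᶠ w in 𝓝 z, BindingLE C z w → w ∈ Sset C := by
  have hzero : ∀ i, ∀ᶠ w in 𝓝 z, (z i = 0 → w i = 0) → 0 ≤ w i := by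
    intro i
    rcases (hz.1 i).eq_or_lt with hi | hi
    · exact Eventually.of_forall fun w hw => (hw hi.symm).ge
    · filter_upwards [continuousAt_const.eventually_lt (continuous_apply i).continuousAt hi]
        with w hw _ using hw.le
  have htight : ∀ j, ∀ᶠ w in 𝓝 z, ((C *ᵥ z) j = 1 → (C *ᵥ w) j = 1) → (C *ᵥ w) j ≤ 1 := by
    intro j
    rcases (hz.2 j).eq_or_lt with hj | hj
    · exact Eventually.of_forall fun w hw => (hw hj).le
    · have hcont : Continuous fun w : Fin d → ℝ => (C *ᵥ w) j :=
        (continuous_apply j).comp (continuous_const.matrix_mulVec continuous_id)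
      filter_upwards [hcont.continuousAt.eventually_lt continuousAt_const hj]
        with w hw _ using hw.le
  filter_upwards [eventually_all.2 hzero, eventually_all.2 htight]
    with w hw₁ hw₂ hzw using ⟨fun i => hw₁ i (hzw.1 i), fun j => hw₂ j (hzw.2 j)⟩

theorem exists_bindingCount_lt (hK : IsCompact (Sset C)) {z : Fin d → ℝ} (hz : z ∈ Sset C)
    (hdep : ¬ LinearIndependent ℝ (bindingFamily C z)) (hcount : bindingCount C z ≤ d) :
    ∃ w ∈ Sset C, ¬ LinearIndependent ℝ (bindingFamily C w) ∧
      bindingCount C z < bindingCount C w := by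
  obtain ⟨v, hv, hline⟩ := exists_ne_zero_bindingLE_add_smul hdep hcount
  obtain ⟨t, ht, htmax⟩ := hK.exists_isGreatest_add_smul_mem hz hv
  have hnew : ¬ BindingLE C (z + t • v) z := by
    intro hback
    have hnear : ∀ᶠ s in 𝓝 t, z + s • v ∈ Sset C := by
      have hcont : Continuous fun s : ℝ => z + s • v := by fun_prop
      filter_upwards [(hcont.tendsto t).eventually (eventually_mem_Sset ht)] with s hs
      exact hs (hback.trans (hline s))
    obtain ⟨s, hs, hts⟩ :=
      ((hnear.filter_mono nhdsWithin_le_nhds).and (self_mem_nhdsWithin (s := Set.Ioi t))).exists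
    exact (htmax hs).not_gt hts
  exact ⟨_, ht, fun h => hdep (linearIndependent_bindingFamily_of_bindingLE (hline t) h),
    bindingCount_lt_of_bindingLE (hline t) hnew⟩

theorem linearIndependent_bindingFamily_of_bindingCount_le (hK : IsCompact (Sset C))
    (hle : ∀ z ∈ Sset C, bindingCount C z ≤ d) {z : Fin d → ℝ} (hz : z ∈ Sset C) :
    LinearIndependent ℝ (bindingFamily C z) := by
  by_contra hdep
  refine Nat.forall_not_of_le_of_exists_lt (bindingCount C) d
    (P := fun z => z ∈ Sset C ∧ ¬ LinearIndependent ℝ (bindingFamily C z))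
    (fun z hz => hle z hz.1) (fun z ⟨hz, hdep⟩ => ?_) z ⟨hz, hdep⟩
  obtain ⟨w, hw, hwdep, hlt⟩ := exists_bindingCount_lt hK hz hdep (hle z hz)
  exact ⟨w, ⟨hw, hwdep⟩, hlt⟩

end Binding

/-- Let `S = {z : z ≥ 0, Cz ≤ 𝟙}` be bounded.  Then no `z ∈ S` has more than `d`
binding inequalities iff for every `z ∈ S` the family consisting of the unit vectors
`e_i` for the binding inequalities `z_i = 0` together with the rows `c_jᵀ` of `C` for
the binding inequalities `(Cz)_j = 1` is linearly independent. -/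
theorem nondegenerate_iff_binding_linearIndependent {d : ℕ}
    (C : Matrix (Fin d) (Fin d) ℝ) (hb : Bornology.IsBounded (Sset C)) :
    (∀ z ∈ Sset C,
      (Finset.univ.filter fun i => z i = 0).card +
        (Finset.univ.filter fun j => (C *ᵥ z) j = 1).card ≤ d) ↔
    (∀ z ∈ Sset C,
      LinearIndependent ℝ
        (Sum.elim (fun i : {i : Fin d // z i = 0} => (Pi.single i.1 1 : Fin d → ℝ))
          (fun j : {j : Fin d // (C *ᵥ z) j = 1} => C j.1))) :=
  ⟨fun hle _ hz =>
      linearIndependent_bindingFamily_of_bindingCount_le (Sset.isCompact_of_isBounded C hb) hle hz,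
    fun hli z hz => bindingCount_le_of_linearIndependent (hli z hz)⟩
end
end

section
/- Let (A,B) be an m×n bimatrix game such that P and Q are bounded. Then (A,B) is nondegenerate if and only if the following holds: for every x̂ ∈ X, with I = supp(x̂) and J = bestresp(x̂), the columns of the submatrix B_{IJ} = (b_{ij})_{i∈I, j∈J} of B are linearly independent; and for every ŷ ∈ Y, with K = bestresp(ŷ) and L = supp(ŷ), the rows of the submatrix A_{KL} = (a_{ij})_{i∈K, j∈L} of A are linearly independent. -/
open Matrix
open scoped Classical

noncomputable section

/-!
Independent columns of `B_{IJ}` give `|J| ≤ |I|` at once. Conversely, fix a mixed `x` with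
`I = supp x`, `J = bestresp2 B x`. Boundedness of `P` makes the best-response payoff `v`
positive, so `x / v` lies in the face of `P` where the support is inside `I` and every column
of `J` is tight. This face is compact, hence has an extreme point `z` (Krein–Milman). At an
extreme point no nonzero direction `d` supported on `supp z` keeps the tight columns tight
(else `z ± t • d` would both lie in the face for small `t`), so the rows of
`B_{supp z, tight z}` are independent. Nondegeneracy at `z` normalised gives at most
`|supp z|` tight columns, so the columns are independent as well, and then so are those of
`B_{IJ}`, which has more rows and fewer columns. Player 2's condition is player 1's for `Aᵀ`,
whose polytope `P` is `Q`.
-/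

open Filter Topology

theorem Matrix.linearIndependent_col_of_linearIndependent_row {K ι κ : Type*} [Field K]
    [Fintype ι] [Fintype κ] {M : Matrix ι κ K} (h : LinearIndependent K M.row)
    (hcard : Fintype.card κ ≤ Fintype.card ι) : LinearIndependent K M.col := by
  have hrank := h.rank_matrix
  rw [linearIndependent_iff_card_eq_finrank_span, Set.finrank, ← rank_eq_finrank_span_cols,
    hrank]
  exact le_antisymm hcard (hrank ▸ M.rank_le_card_width)

theorem linearIndependent_submatrix_col_mono {R ι κ : Type*} [Semiring R] (B : Matrix ι κ R)
    {S I : Finset ι} {J T : Finset κ} (hSI : S ⊆ I) (hJT : J ⊆ T)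
    (h : LinearIndependent R fun j : T => fun i : S => B i j) :
    LinearIndependent R fun j : J => fun i : I => B i j :=
  LinearIndependent.of_comp (LinearMap.funLeft R R fun i : S => (⟨i, hSI i.2⟩ : I))
    (h.comp (fun j : J => ⟨j, hJT j.2⟩) fun _ _ hj => Subtype.ext (congrArg Subtype.val hj :))

theorem linearIndependent_submatrix_row_of_forall {R ι κ : Type*} [CommRing R] [Fintype ι]
    (B : Matrix ι κ R) {S : Finset ι} {T : Finset κ}
    (h : ∀ d : ι → R, (∀ i ∉ S, d i = 0) → (∀ j ∈ T, (Bᵀ *ᵥ d) j = 0) → d = 0) :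
    LinearIndependent R fun i : S => fun j : T => B i j := by
  rw [Fintype.linearIndependent_iff]
  intro g hg i
  set d : ι → R := fun i => if hi : i ∈ S then g ⟨i, hi⟩ else 0
  have hd : d = 0 := by
    refine h d (fun i hi => dif_neg hi) fun j hj => ?_
    have := congrFun hg ⟨j, hj⟩
    simp only [Finset.sum_apply, Pi.smul_apply, smul_eq_mul, Pi.zero_apply] at this
    rw [← this, mulVec, dotProduct, ← Finset.sum_subset (Finset.subset_univ S),
      ← Finset.sum_coe_sort]
    · simp [d, mul_comm]
    · intro i _ hi
      simp [d, hi]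
  simpa [d] using congrFun hd i

theorem Bornology.not_isBounded_of_forall_smul_mem {E : Type*} [NormedAddCommGroup E]
    [NormedSpace ℝ E] {s : Set E} {x : E} (hx : x ≠ 0) (h : ∀ t : ℝ, 0 ≤ t → t • x ∈ s) :
    ¬ Bornology.IsBounded s := by
  rw [isBounded_iff_forall_norm_le]
  rintro ⟨C, hC⟩
  have hxn : 0 < ‖x‖ := norm_pos_iff.mpr hx
  have hC0 : 0 ≤ C := (norm_nonneg _).trans (hC _ (by simpa using h 0 le_rfl))
  have ht : 0 ≤ (C + 1) / ‖x‖ := by positivity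
  have := hC _ (h _ ht)
  rw [norm_smul, Real.norm_of_nonneg ht, div_mul_cancel₀ _ hxn.ne'] at this
  linarith

def tight {ι κ : Type*} [Fintype ι] [Fintype κ] (B : Matrix ι κ ℝ) (z : ι → ℝ) : Finset κ :=
  Finset.univ.filter fun j => (Bᵀ *ᵥ z) j = 1

theorem card_tight_le_card_supp {ι κ : Type*} [Fintype ι] [Fintype κ] {B : Matrix ι κ ℝ}
    (hnd : ∀ x : ι → ℝ, IsMixed x → (bestresp2 B x).card ≤ (supp x).card) {z : ι → ℝ}
    (hz₀ : ∀ i, 0 ≤ z i) (hz₁ : ∀ j, (Bᵀ *ᵥ z) j ≤ 1) (hz : z ≠ 0) :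
    (tight B z).card ≤ (supp z).card := by
  set σ := ∑ i, z i
  have hσ : 0 < σ := by
    obtain ⟨i, hi⟩ := Function.ne_iff.1 hz
    exact Finset.sum_pos' (fun i _ => hz₀ i) ⟨i, Finset.mem_univ i, (hz₀ i).lt_of_ne' hi⟩
  have hmixed : IsMixed (σ⁻¹ • z) :=
    ⟨fun i => smul_nonneg (inv_nonneg.2 hσ.le) (hz₀ i), by
      simp only [Pi.smul_apply, smul_eq_mul, ← Finset.mul_sum]
      exact inv_mul_cancel₀ hσ.ne'⟩
  have hsupp : supp (σ⁻¹ • z) = supp z := by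
    ext i
    simp [supp, hσ]
  have htight : tight B z ⊆ bestresp2 B (σ⁻¹ • z) := by
    intro j hj
    simp only [tight, bestresp2, Finset.mem_filter, Finset.mem_univ, true_and, mulVec_smul,
      Pi.smul_apply, smul_eq_mul] at hj ⊢
    exact fun k => hj ▸ mul_le_mul_of_nonneg_left (hz₁ k) (inv_nonneg.2 hσ.le)
  calc (tight B z).card ≤ (bestresp2 B (σ⁻¹ • z)).card := Finset.card_le_card htight
    _ ≤ (supp z).card := hsupp ▸ hnd _ hmixed

def Pface {m n : ℕ} (B : Matrix (Fin m) (Fin n) ℝ) (I : Finset (Fin m)) (J : Finset (Fin n)) :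
    Set (Fin m → ℝ) :=
  {z | z ∈ Pset B ∧ (∀ i ∉ I, z i = 0) ∧ ∀ j ∈ J, (Bᵀ *ᵥ z) j = 1}

section Pface

variable {m n : ℕ} {B : Matrix (Fin m) (Fin n) ℝ} {I : Finset (Fin m)} {J : Finset (Fin n)}

theorem isClosed_Pface : IsClosed (Pface B I J) := by
  simp only [Pface, Pset, Set.ofPred_and, Set.ofPred_forall]
  refine .inter (.inter ?_ ?_) (.inter ?_ ?_) <;> refine isClosed_iInter fun _ => ?_
  · exact isClosed_le (by fun_prop) (by fun_prop)
  · exact isClosed_le (by fun_prop) (by fun_prop)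
  · exact isClosed_iInter fun _ => isClosed_eq (by fun_prop) (by fun_prop)
  · exact isClosed_iInter fun _ => isClosed_eq (by fun_prop) (by fun_prop)

theorem eventually_add_smul_mem_Pface {z d : Fin m → ℝ} (hz : z ∈ Pface B I J)
    (hd : ∀ i ∉ supp z, d i = 0) (hBd : ∀ j ∈ tight B z, (Bᵀ *ᵥ d) j = 0) :
    ∀ᶠ t in 𝓝 (0 : ℝ), z + t • d ∈ Pface B I J := by
  obtain ⟨⟨hz₀, hz₁⟩, hzI, hzJ⟩ := hz
  have hsupp (i : Fin m) : i ∈ supp z ↔ 0 < z i := by simp [supp]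
  have htight (j : Fin n) : j ∈ tight B z ↔ (Bᵀ *ᵥ z) j = 1 := by simp [tight]
  have hlim (c e : ℝ) : Tendsto (fun t : ℝ => c + t * e) (𝓝 0) (𝓝 c) :=
    (by fun_prop : Continuous fun t : ℝ => c + t * e).tendsto' 0 c (by simp)
  have hnonneg : ∀ᶠ t in 𝓝 (0 : ℝ), ∀ i, 0 ≤ z i + t * d i := by
    refine eventually_all.2 fun i => ?_
    by_cases hi : 0 < z i
    · exact ((hlim _ _).eventually_const_lt hi).mono fun _ => le_of_lt
    · simp [hd i ((hsupp i).not.2 hi), hz₀ i]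
  have hle : ∀ᶠ t in 𝓝 (0 : ℝ), ∀ j, (Bᵀ *ᵥ z) j + t * (Bᵀ *ᵥ d) j ≤ 1 := by
    refine eventually_all.2 fun j => ?_
    by_cases hj : (Bᵀ *ᵥ z) j = 1
    · simp [hBd j ((htight j).2 hj), hj]
    · exact ((hlim _ _).eventually_lt_const ((hz₁ j).lt_of_ne hj)).mono fun _ => le_of_lt
  filter_upwards [hnonneg, hle] with t ht₀ ht₁
  simp only [Pface, Pset, Set.mem_ofPred_eq, mulVec_add, mulVec_smul, Pi.add_apply,
    Pi.smul_apply, smul_eq_mul]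
  refine ⟨⟨ht₀, ht₁⟩, fun i hi => ?_, fun j hj => ?_⟩
  · have hzi := hzI i hi
    simp [hzi, hd i (by simp [hsupp, hzi])]
  · simp [hzJ j hj, hBd j ((htight j).2 (hzJ j hj))]

theorem linearIndependent_row_of_mem_extremePoints_Pface {z : Fin m → ℝ}
    (hz : z ∈ Set.extremePoints ℝ (Pface B I J)) :
    LinearIndependent ℝ fun i : supp z => fun j : tight B z => B i j := by
  refine linearIndependent_submatrix_row_of_forall B fun d hd hBd => ?_
  by_contra hd0
  have hplus := eventually_add_smul_mem_Pface hz.1 hd hBd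
  have hminus := eventually_add_smul_mem_Pface hz.1 (d := -d) (by simpa using hd)
    (by simpa [mulVec_neg] using hBd)
  obtain ⟨t, ⟨hadd, hsub⟩, ht⟩ :=
    (((hplus.and hminus).filter_mono nhdsWithin_le_nhds).and
      (self_mem_nhdsWithin : {0}ᶜ ∈ 𝓝[≠] (0 : ℝ))).exists
  rw [smul_neg, ← sub_eq_add_neg] at hsub
  have := ((mem_extremePoints.1 hz).2 _ hsub _ hadd (mem_openSegment_sub_add z (t • d))).2
  exact smul_ne_zero ht hd0 (by simpa using this)

theorem exists_pos_mulVec_of_isBounded_Pset (hP : Bornology.IsBounded (Pset B))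
    {x : Fin m → ℝ} (hx : IsMixed x) : ∃ j, 0 < (Bᵀ *ᵥ x) j := by
  by_contra! h
  refine Bornology.not_isBounded_of_forall_smul_mem (s := Pset B) (x := x) ?_
    (fun t ht => ⟨fun i => mul_nonneg ht (hx.1 i), fun j => ?_⟩) hP
  · rintro rfl
    simpa using hx.2
  · rw [mulVec_smul, Pi.smul_apply, smul_eq_mul]
    exact (mul_nonpos_of_nonneg_of_nonpos ht (h j)).trans zero_le_one

theorem inv_smul_mem_Pface {x : Fin m → ℝ} (hx : IsMixed x) {j₀ : Fin n}
    (hj₀ : j₀ ∈ bestresp2 B x) (hv : 0 < (Bᵀ *ᵥ x) j₀) :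
    ((Bᵀ *ᵥ x) j₀)⁻¹ • x ∈ Pface B (supp x) (bestresp2 B x) := by
  simp only [bestresp2, Finset.mem_filter, Finset.mem_univ, true_and] at hj₀
  simp only [Pface, Pset, supp, bestresp2, Set.mem_ofPred_eq, Finset.mem_filter,
    Finset.mem_univ, true_and, mulVec_smul, Pi.smul_apply, smul_eq_mul]
  refine ⟨⟨fun i => mul_nonneg (inv_nonneg.2 hv.le) (hx.1 i), fun j => ?_⟩,
    fun i hi => ?_, fun j hj => ?_⟩
  · exact (inv_mul_le_one₀ hv).2 (hj₀ j)
  · simp [le_antisymm (not_lt.1 hi) (hx.1 i)]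
  · rw [le_antisymm (hj₀ j) (hj j₀), inv_mul_cancel₀ hv.ne']

theorem linearIndependent_of_forall_card_bestresp2_le (hP : Bornology.IsBounded (Pset B))
    (hnd : ∀ x : Fin m → ℝ, IsMixed x → (bestresp2 B x).card ≤ (supp x).card)
    {x : Fin m → ℝ} (hx : IsMixed x) :
    LinearIndependent ℝ fun j : bestresp2 B x => fun i : supp x => B i j := by
  rcases (bestresp2 B x).eq_empty_or_nonempty with hJ | ⟨j₀, hj₀⟩
  · have := Finset.isEmpty_coe_sort.2 hJ
    exact linearIndependent_empty_type
  obtain ⟨j, hj⟩ := exists_pos_mulVec_of_isBounded_Pset hP hx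
  have hv : 0 < (Bᵀ *ᵥ x) j₀ := hj.trans_le (by simp_all [bestresp2])
  obtain ⟨z, hz⟩ := (Metric.isCompact_of_isClosed_isBounded isClosed_Pface
    (hP.subset fun _ h => h.1)).extremePoints_nonempty ⟨_, inv_smul_mem_Pface hx hj₀ hv⟩
  obtain ⟨⟨hz₀, hz₁⟩, hzI, hzJ⟩ := hz.1
  have hSI : supp z ⊆ supp x := fun i hi => by
    by_contra h
    simp [supp, hzI i h] at hi
  have hJT : bestresp2 B x ⊆ tight B z := fun j hj => by simp [tight, hzJ j hj]
  have hz_ne : z ≠ 0 := by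
    rintro rfl
    simpa using hzJ j₀ hj₀
  refine linearIndependent_submatrix_col_mono B hSI hJT
    (linearIndependent_col_of_linearIndependent_row
      (linearIndependent_row_of_mem_extremePoints_Pface hz) ?_)
  simpa using card_tight_le_card_supp hnd hz₀ hz₁ hz_ne

theorem forall_card_bestresp2_le_iff (hP : Bornology.IsBounded (Pset B)) :
    (∀ x : Fin m → ℝ, IsMixed x → (bestresp2 B x).card ≤ (supp x).card) ↔
      ∀ x : Fin m → ℝ, IsMixed x →
        LinearIndependent ℝ fun j : bestresp2 B x => fun i : supp x => B i j :=
  ⟨fun hnd _ hx => linearIndependent_of_forall_card_bestresp2_le hP hnd hx,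
    fun h x hx => by simpa using (h x hx).fintype_card_le_finrank⟩

end Pface

theorem Qset_eq_Pset_transpose {m n : ℕ} (A : Matrix (Fin m) (Fin n) ℝ) :
    Qset A = Pset Aᵀ := by
  ext y
  simp only [Qset, Pset, transpose_transpose, Set.mem_ofPred_eq]
  exact and_comm

/-- Let `P` and `Q` be bounded.  Then `(A,B)` is nondegenerate iff for every mixed
strategy `x̂ ∈ X` with `I = supp(x̂)`, `J = bestresp(x̂)` the columns of the submatrix
`B_{IJ}` are linearly independent, and for every `ŷ ∈ Y` with `K = bestresp(ŷ)`,
`L = supp(ŷ)` the rows of the submatrix `A_{KL}` are linearly independent. -/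
theorem nondegenerate_iff_submatrices_full_rank {m n : ℕ}
    (A B : Matrix (Fin m) (Fin n) ℝ)
    (hP : Bornology.IsBounded (Pset B)) (hQ : Bornology.IsBounded (Qset A)) :
    Nondegenerate A B ↔
      ((∀ x : Fin m → ℝ, IsMixed x →
          LinearIndependent ℝ (fun j : {j // j ∈ bestresp2 B x} =>
            fun i : {i // i ∈ supp x} => B i.1 j.1)) ∧
       (∀ y : Fin n → ℝ, IsMixed y →
          LinearIndependent ℝ (fun i : {i // i ∈ bestresp1 A y} =>
            fun j : {j // j ∈ supp y} => A i.1 j.1))) :=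
  and_congr (forall_card_bestresp2_le_iff hP)
    (forall_card_bestresp2_le_iff (B := Aᵀ) (Qset_eq_Pset_transpose A ▸ hQ))
end
end
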